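/- arXiv:1109.5615 — 7 statements merged into one kernel-verified Lean document; each statement's English description precedes it below -/
import Mathlib

section
/- Suppose t₁ and t₂ are parse trees of a context-free grammar G, A is a variable such that t₁ is not A-recurrence free (some root-to-leaf path of t₁ contains at least two nodes labelled A) and t₂ is not A-occurrence free (A occurs in t₂). Then there exist parse trees t₁′ and t₂′ with root(t₁′) = root(t₁), root(t₂′) = root(t₂), Π(Y(t₁)) + Π(Y(t₂)) = Π(Y(t₁′)) + Π(Y(t₂′)), and t₁′ is A-recurrence free. -/
/-- Trees whose internal nodes are labelled by nonterminals `N` and whose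
leaves are labelled by terminals `T`. -/
inductive PTree (T N : Type*) where
  | leaf (a : T) : PTree T N
  | node (A : N) (children : List (PTree T N)) : PTree T N

namespace PTree

variable {T N : Type*}

/-- The symbol labelling the root of a tree. -/
def rootSym : PTree T N → Symbol T N
  | leaf a => Symbol.terminal a
  | node A _ => Symbol.nonterminal A

/-- The yield: the terminal word read off the leaves. -/
def yield : PTree T N → List T
  | leaf a => [a]
  | node _ cs => (cs.attach.map (fun c => yield c.1)).flatten
termination_by t => sizeOf t
decreasing_by
  simp_wf
  have := List.sizeOf_lt_of_mem c.2
  omega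

/-- A tree is a valid parse tree of the grammar `g` when the children of every
internal node spell the right-hand side of a production of its label. -/
inductive IsParseTree (g : ContextFreeGrammar T) : PTree T g.NT → Prop where
  | leaf (a : T) : IsParseTree g (leaf a)
  | node (A : g.NT) (cs : List (PTree T g.NT))
      (hrule : (⟨A, cs.map rootSym⟩ : ContextFreeRule T g.NT) ∈ g.rules)
      (hcs : ∀ c ∈ cs, IsParseTree g c) : IsParseTree g (node A cs)

/-- The variable `A` occurs somewhere (labels some internal node) in the tree. -/
inductive Occurs (A : N) : PTree T N → Prop where
  | here (cs : List (PTree T N)) : Occurs A (node A cs)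
  | child {B : N} {cs : List (PTree T N)} {c : PTree T N} (hc : c ∈ cs)
      (h : Occurs A c) : Occurs A (node B cs)

/-- Some root-to-leaf path contains two nodes labelled `A`: equivalently, some node
labelled `A` has a node labelled `A` strictly below it. -/
inductive HasRecurrence (A : N) : PTree T N → Prop where
  | here {cs : List (PTree T N)} {c : PTree T N} (hc : c ∈ cs) (h : Occurs A c) :
      HasRecurrence A (node A cs)
  | child {B : N} {cs : List (PTree T N)} {c : PTree T N} (hc : c ∈ cs)
      (h : HasRecurrence A c) : HasRecurrence A (node B cs)

end PTree

open PTree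

/-!
Write `t₁ = C[W[v]]`, where `W` is a nonempty one-hole context with root `A` and `v` is rooted
at `A`, and `t₂ = E[u]` with `u` rooted at `A`. Moving the segment `W` from `t₁` onto `u` gives
the parse trees `C[v]` and `E[W[u]]`: the roots are unchanged, the leaves are only redistributed,
and `C[v]` is strictly smaller than `t₁`. Repeating this while `t₁` has a recurrence terminates.
-/

namespace PTree

variable {T N : Type*}

lemma yield_node (B : N) (cs : List (PTree T N)) :
    yield (node B cs) = (cs.map yield).flatten := by
  rw [yield, List.attach_map_val]

lemma sizeOf_lt_sizeOf_node (B : N) {c : PTree T N} {cs : List (PTree T N)} (hc : c ∈ cs) :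
    sizeOf c < sizeOf (node B cs) := by
  have := List.sizeOf_lt_of_mem hc
  simp only [node.sizeOf_spec]
  omega

/-- `node B l r C` is the node `B` whose children are `l`, then the context `C`, then `r`. -/
inductive Context (T N : Type*) where
  | hole : Context T N
  | node (B : N) (l r : List (PTree T N)) (C : Context T N) : Context T N

namespace Context

def fill : Context T N → PTree T N → PTree T N
  | hole, s => s
  | node B l r C, s => PTree.node B (l ++ fill C s :: r)

lemma rootSym_fill (C : Context T N) {s u : PTree T N} (h : rootSym s = rootSym u) :
    rootSym (C.fill s) = rootSym (C.fill u) := by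
  cases C with
  | hole => exact h
  | node => rfl

lemma yield_fill (C : Context T N) :
    ∃ x y : List T, ∀ s, yield (C.fill s) = x ++ yield s ++ y := by
  induction C with
  | hole => exact ⟨[], [], fun s => by simp [fill]⟩
  | node B l r C ih =>
    obtain ⟨x, y, hxy⟩ := ih
    exact ⟨(l.map yield).flatten ++ x, y ++ (r.map yield).flatten,
      fun s => by simp [fill, yield_node, hxy]⟩

lemma sizeOf_le_sizeOf_fill (C : Context T N) (s : PTree T N) :
    sizeOf s ≤ sizeOf (C.fill s) := by
  induction C with
  | hole => exact le_rfl
  | node B l r C ih => exact ih.trans (sizeOf_lt_sizeOf_node B (by simp)).le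

lemma sizeOf_fill_lt_sizeOf_fill (C : Context T N) {s u : PTree T N}
    (h : sizeOf s < sizeOf u) : sizeOf (C.fill s) < sizeOf (C.fill u) := by
  induction C with
  | hole => exact h
  | node B l r C ih =>
    have key : ∀ l' : List (PTree T N),
        sizeOf (l' ++ C.fill s :: r) < sizeOf (l' ++ C.fill u :: r) := by
      intro l'
      induction l' with
      | nil => simp only [List.nil_append, List.cons.sizeOf_spec]; omega
      | cons a l' ih' => simp only [List.cons_append, List.cons.sizeOf_spec]; omega
    simp only [fill, PTree.node.sizeOf_spec]
    have := key l
    omega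

lemma exists_fill_of_occurs {A : N} {t : PTree T N} (h : Occurs A t) :
    ∃ (C : Context T N) (cs : List (PTree T N)), t = C.fill (PTree.node A cs) := by
  induction h with
  | here cs => exact ⟨hole, cs, rfl⟩
  | @child B cs c hc _ ih =>
    obtain ⟨C, ds, rfl⟩ := ih
    obtain ⟨l, r, rfl⟩ := List.append_of_mem hc
    exact ⟨node B l r C, ds, rfl⟩

lemma exists_fill_of_hasRecurrence {A : N} {t : PTree T N} (h : HasRecurrence A t) :
    ∃ (C D : Context T N) (l r ds : List (PTree T N)),
      t = C.fill ((node A l r D).fill (PTree.node A ds)) := by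
  induction h with
  | @here cs c hc hocc =>
    obtain ⟨D, ds, rfl⟩ := exists_fill_of_occurs hocc
    obtain ⟨l, r, rfl⟩ := List.append_of_mem hc
    exact ⟨hole, D, l, r, ds, rfl⟩
  | @child B cs c hc _ ih =>
    obtain ⟨C, D, l', r', ds, rfl⟩ := ih
    obtain ⟨l, r, rfl⟩ := List.append_of_mem hc
    exact ⟨node B l r C, D, l', r', ds, rfl⟩

end Context

section Grammar

variable {g : ContextFreeGrammar T}

lemma IsParseTree.of_mem {B : g.NT} {cs : List (PTree T g.NT)}
    (h : IsParseTree g (PTree.node B cs)) {c : PTree T g.NT} (hc : c ∈ cs) : IsParseTree g c := by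
  cases h with
  | node _ _ _ hcs => exact hcs c hc

lemma IsParseTree.replace {B : g.NT} {l r : List (PTree T g.NT)} {c c' : PTree T g.NT}
    (h : IsParseTree g (PTree.node B (l ++ c :: r))) (hc' : IsParseTree g c')
    (hroot : rootSym c' = rootSym c) : IsParseTree g (PTree.node B (l ++ c' :: r)) := by
  cases h with
  | node _ _ hrule hcs =>
    refine .node _ _ (by simpa [hroot] using hrule) fun x hx => ?_
    rcases List.mem_append.1 hx with hx | hx
    · exact hcs x (by simp [hx])
    · rcases List.mem_cons.1 hx with rfl | hx
      · exact hc'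
      · exact hcs x (by simp [hx])

namespace Context

lemma isParseTree_of_fill {C : Context T g.NT} {u : PTree T g.NT}
    (h : IsParseTree g (C.fill u)) : IsParseTree g u := by
  induction C with
  | hole => exact h
  | node B l r C ih => exact ih (h.of_mem (by simp))

lemma isParseTree_fill {C : Context T g.NT} {s u : PTree T g.NT}
    (h : IsParseTree g (C.fill u)) (hs : IsParseTree g s) (hroot : rootSym s = rootSym u) :
    IsParseTree g (C.fill s) := by
  induction C with
  | hole => exact hs
  | node B l r C ih =>
    exact h.replace (ih (h.of_mem (by simp))) (C.rootSym_fill hroot)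

end Context

theorem exists_exchange_not_hasRecurrence (A : g.NT) (t u : PTree T g.NT)
    (ht : IsParseTree g t) (hu : IsParseTree g u) (hroot : rootSym u = .nonterminal A) :
    ∃ t' u' : PTree T g.NT, IsParseTree g t' ∧ IsParseTree g u' ∧
      rootSym t' = rootSym t ∧ rootSym u' = .nonterminal A ∧
      (yield t : Multiset T) + yield u = yield t' + yield u' ∧
      ¬ HasRecurrence A t' := by
  by_cases hrec : HasRecurrence A t
  swap
  · exact ⟨t, u, ht, hu, rfl, hroot, rfl, hrec⟩
  obtain ⟨C, D, l, r, ds, rfl⟩ := Context.exists_fill_of_hasRecurrence hrec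
  set W : Context T g.NT := .node A l r D
  set v : PTree T g.NT := PTree.node A ds
  have hWv : IsParseTree g (W.fill v) := Context.isParseTree_of_fill ht
  have hv : IsParseTree g v := Context.isParseTree_of_fill hWv
  have hlt : sizeOf (C.fill v) < sizeOf (C.fill (W.fill v)) :=
    C.sizeOf_fill_lt_sizeOf_fill <| (D.sizeOf_le_sizeOf_fill v).trans_lt
      (sizeOf_lt_sizeOf_node A (by simp))
  obtain ⟨t', u', ht', hu', hroot_t', hroot_u', hcount, hfree⟩ :=
    exists_exchange_not_hasRecurrence A (C.fill v) (W.fill u)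
      (Context.isParseTree_fill ht hv rfl) (Context.isParseTree_fill hWv hu hroot) rfl
  refine ⟨t', u', ht', hu', hroot_t'.trans (C.rootSym_fill rfl), hroot_u', ?_, hfree⟩
  obtain ⟨xC, yC, hC⟩ := C.yield_fill
  obtain ⟨xW, yW, hW⟩ := W.yield_fill
  rw [← hcount, hC, hC, hW, hW]
  simp only [← Multiset.coe_add]
  abel
termination_by sizeOf t

end Grammar

end PTree

theorem parse_tree_reduce_recurrence_general {T : Type*} [DecidableEq T]
    (g : ContextFreeGrammar T) (A : g.NT) (t₁ t₂ : PTree T g.NT)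
    (h₁ : IsParseTree g t₁) (h₂ : IsParseTree g t₂)
    (hocc : Occurs A t₂) :
    ∃ t₁' t₂' : PTree T g.NT, IsParseTree g t₁' ∧ IsParseTree g t₂' ∧
      rootSym t₁' = rootSym t₁ ∧ rootSym t₂' = rootSym t₂ ∧
      (∀ σ : T, (yield t₁).count σ + (yield t₂).count σ
        = (yield t₁').count σ + (yield t₂').count σ) ∧
      ¬ HasRecurrence A t₁' := by
  obtain ⟨E, cs, rfl⟩ := Context.exists_fill_of_occurs hocc
  obtain ⟨t₁', u', h₁', hu', hroot₁, hroot_u, hcount, hfree⟩ :=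
    exists_exchange_not_hasRecurrence A t₁ (.node A cs) h₁
      (Context.isParseTree_of_fill h₂) rfl
  refine ⟨t₁', E.fill u', h₁', Context.isParseTree_fill h₂ hu' hroot_u, hroot₁,
    E.rootSym_fill hroot_u, fun σ => ?_, hfree⟩
  obtain ⟨x, y, hE⟩ := E.yield_fill
  have := congrArg (Multiset.count σ) hcount
  simp only [Multiset.count_add, Multiset.coe_count] at this
  simp only [hE, List.count_append]
  omega

/-- Lemma 1 of the paper: if `t₁` is not `A`-recurrence free and `t₂` is not
`A`-occurrence free, then there are parse trees `t₁′, t₂′` with the same roots,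
the same total Parikh image of yields, such that `t₁′` is `A`-recurrence free. -/
theorem parse_tree_reduce_recurrence {T : Type*} [DecidableEq T]
    (g : ContextFreeGrammar T) (A : g.NT) (t₁ t₂ : PTree T g.NT)
    (h₁ : IsParseTree g t₁) (h₂ : IsParseTree g t₂)
    (hrec : HasRecurrence A t₁) (hocc : Occurs A t₂) :
    ∃ t₁' t₂' : PTree T g.NT, IsParseTree g t₁' ∧ IsParseTree g t₂' ∧
      rootSym t₁' = rootSym t₁ ∧ rootSym t₂' = rootSym t₂ ∧
      (∀ σ : T, (yield t₁).count σ + (yield t₂).count σ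
        = (yield t₁').count σ + (yield t₂').count σ) ∧
      ¬ HasRecurrence A t₁' :=
  parse_tree_reduce_recurrence_general g A t₁ t₂ h₁ h₂ hocc
end

section
/- Let RS be any reachable state of the automaton A(G) constructed from a CFG G of degree m. Then for every position i of RS, the total multiplicity of the Followup multiset satisfies Σ_{A ∈ V} R_i.Followup(A) ≤ m. -/
/-- The list of variable occurrences (in order) in the right-hand side of a rule. -/
def ruleVars {T N : Type*} (r : ContextFreeRule T N) : List N :=
  r.output.filterMap (fun s => match s with
    | Symbol.nonterminal B => some B
    | _ => none)

/-- The word `w₀w₁⋯w_r` of terminals (in order) in the right-hand side of a rule. -/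
def ruleTerms {T N : Type*} (r : ContextFreeRule T N) : List T :=
  r.output.filterMap (fun s => match s with
    | Symbol.terminal a => some a
    | _ => none)

/-- A reminder pair: a `Current` component in `V ∪ {⊥}` (modelled as `Option`,
with `none` playing the role of `⊥`) and a `Followup` multiset over the variables. -/
abbrev RPair {T : Type*} (g : ContextFreeGrammar T) : Type _ :=
  Option g.NT × Multiset g.NT

/-- A reminder sequence: a finite sequence of reminder pairs. -/
abbrev RSeq {T : Type*} (g : ContextFreeGrammar T) : Type _ := List (RPair g)

/-- The five transition rules of the automaton `A(G)`; a transition reads a word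
over the terminals. -/
inductive Step {T : Type*} (g : ContextFreeGrammar T) [DecidableEq g.NT] :
    RSeq g → List T → RSeq g → Prop where
  /-- (1) `RS·(A,∅) ⟹ RS·(A_j, ⟦A₁,…,A_r⟧ ⊖ ⟦A_j⟧)` reading `w₀w₁⋯w_r`,
  for a production `A → w₀A₁w₁⋯A_r w_r` with `r ≥ 1`. -/
  | ext (RS : RSeq g) (r : ContextFreeRule T g.NT) (hr : r ∈ g.rules)
      (Aj : g.NT) (hAj : Aj ∈ ruleVars r) :
      Step g (RS ++ [(some r.input, 0)]) (ruleTerms r)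
        (RS ++ [(some Aj, (ruleVars r : Multiset g.NT).erase Aj)])
  /-- (2) `RS·(A,v) ⟹ RS·(A,v)·(A_j, ⟦A₁,…,A_r⟧ ⊖ ⟦A_j⟧)` when `v ≠ ∅`. -/
  | extNe (RS : RSeq g) (r : ContextFreeRule T g.NT) (hr : r ∈ g.rules)
      (v : Multiset g.NT) (hv : v ≠ 0) (Aj : g.NT) (hAj : Aj ∈ ruleVars r) :
      Step g (RS ++ [(some r.input, v)]) (ruleTerms r)
        (RS ++ [(some r.input, v), (some Aj, (ruleVars r : Multiset g.NT).erase Aj)])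
  /-- (3) `RS·(A,∅) ⟹ RS·(⊥,∅)` reading `w`, for a production `A → w`. -/
  | replE (RS : RSeq g) (r : ContextFreeRule T g.NT) (hr : r ∈ g.rules)
      (hterm : ruleVars r = []) :
      Step g (RS ++ [(some r.input, 0)]) (ruleTerms r) (RS ++ [(none, 0)])
  /-- (4) `RS·(A, v ⊕ ⟦A′⟧) ⟹ RS·(A′, v)` reading `w`, for a production `A → w`. -/
  | replNe (RS : RSeq g) (r : ContextFreeRule T g.NT) (hr : r ∈ g.rules)
      (hterm : ruleVars r = []) (v : Multiset g.NT) (A' : g.NT) :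
      Step g (RS ++ [(some r.input, v + {A'})]) (ruleTerms r) (RS ++ [(some A', v)])
  /-- (5) `RS·(A, v ⊕ ⟦A′⟧)·(⊥,∅) ⟹ RS·(A′, v)` reading `ε`. -/
  | shorten (RS : RSeq g) (A : g.NT) (v : Multiset g.NT) (A' : g.NT) :
      Step g (RS ++ [(some A, v + {A'}), (none, 0)]) [] (RS ++ [(some A', v)])

/-- The state constraint of `A(G)`: every variable occurs at most twice (as a
`Current` component) in the reminder sequence. -/
def Ok {T : Type*} (g : ContextFreeGrammar T) [DecidableEq g.NT] (RS : RSeq g) : Prop :=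
  ∀ A : g.NT, (RS.map Prod.fst).count (some A) ≤ 2

/-- Multi-step runs of `A(G)` through states of the automaton, concatenating the
words read. -/
inductive Steps {T : Type*} (g : ContextFreeGrammar T) [DecidableEq g.NT] :
    RSeq g → List T → RSeq g → Prop where
  | refl (RS : RSeq g) (h : Ok g RS) : Steps g RS [] RS
  | tail {RS₁ RS₂ RS₃ : RSeq g} {w w' : List T} (h : Steps g RS₁ w RS₂)
      (hstep : Step g RS₂ w' RS₃) (h3 : Ok g RS₃) : Steps g RS₁ (w ++ w') RS₃

/-- The initial state `(S, ∅)` of `A(G)`. -/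
def start {T : Type*} (g : ContextFreeGrammar T) : RSeq g := [(some g.initial, 0)]

/-- A reminder sequence is a (reachable) state of `A(G)` if it can be reached from
the initial state `(S, ∅)`. -/
def ReachableState {T : Type*} (g : ContextFreeGrammar T) [DecidableEq g.NT]
    (RS : RSeq g) : Prop :=
  ∃ w : List T, Steps g (start g) w RS

/-- `A(G)` accepts the word `w`: it can go from the initial state `(S,∅)` to the
final state `(⊥,∅)` reading `w`. -/
def AutAccepts {T : Type*} (g : ContextFreeGrammar T) [DecidableEq g.NT]
    (w : List T) : Prop :=
  Steps g (start g) w [(none, 0)]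


lemma step_inv {T : Type*} (g : ContextFreeGrammar T) [DecidableEq g.NT] (m : ℕ)
    (hdeg : ∀ r ∈ g.rules, (ruleVars r).length ≤ m + 1)
    {RS₁ RS₂ : RSeq g} {w : List T} (h : Step g RS₁ w RS₂)
    (hinv : ∀ p ∈ RS₁, Multiset.card p.2 ≤ m) :
    ∀ p ∈ RS₂, Multiset.card p.2 ≤ m := by
  cases h with
  | ext RS r hr Aj hAj =>
      intro p hp
      rcases List.mem_append.1 hp with hp | hp
      · exact hinv p (List.mem_append_left _ hp)
      · simp only [List.mem_singleton] at hp
        subst hp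
        have hc : Multiset.card ((ruleVars r : Multiset g.NT).erase Aj)
            = (ruleVars r).length - 1 := by
          rw [Multiset.card_erase_of_mem (by simpa using hAj)]
          simp
        have hl := hdeg r hr
        simp only [hc]
        omega
  | extNe RS r hr v hv Aj hAj =>
      intro p hp
      rcases List.mem_append.1 hp with hp | hp
      · exact hinv p (List.mem_append_left _ hp)
      · simp only [List.mem_cons, List.mem_singleton] at hp
        simp only [List.not_mem_nil, or_false] at hp
        rcases hp with hp | hp
        · subst hp
          exact hinv _ (List.mem_append_right _ (by simp))
        · subst hp
          have hc : Multiset.card ((ruleVars r : Multiset g.NT).erase Aj)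
              = (ruleVars r).length - 1 := by
            rw [Multiset.card_erase_of_mem (by simpa using hAj)]
            simp
          have hl := hdeg r hr
          simp only [hc]
          omega
  | replE RS r hr hterm =>
      intro p hp
      rcases List.mem_append.1 hp with hp | hp
      · exact hinv p (List.mem_append_left _ hp)
      · simp only [List.mem_singleton] at hp; subst hp; simp
  | replNe RS r hr hterm v A' =>
      intro p hp
      rcases List.mem_append.1 hp with hp | hp
      · exact hinv p (List.mem_append_left _ hp)
      · simp only [List.mem_singleton] at hp; subst hp
        have := hinv (some r.input, v + {A'}) (List.mem_append_right _ (by simp))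
        simp at this ⊢; omega
  | shorten RS A v A' =>
      intro p hp
      rcases List.mem_append.1 hp with hp | hp
      · exact hinv p (List.mem_append_left _ hp)
      · simp only [List.mem_singleton] at hp; subst hp
        have := hinv (some A, v + {A'}) (List.mem_append_right _ (by simp))
        simp at this ⊢; omega

/-- In every reachable state `RS` of `A(G)`, where `G` has degree `m` (every
production has at most `m + 1` variable occurrences on its right-hand side), every
reminder pair's `Followup` multiset has total multiplicity at most `m`. -/
theorem followup_size_le_degree {T : Type*} (g : ContextFreeGrammar T)
    [DecidableEq g.NT] (m : ℕ)
    (hdeg : ∀ r ∈ g.rules, (ruleVars r).length ≤ m + 1)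
    (RS : RSeq g) (hRS : ReachableState g RS) :
    ∀ p ∈ RS, Multiset.card p.2 ≤ m := by
  obtain ⟨w, hsteps⟩ := hRS
  induction hsteps with
  | refl RS => intro p hp; simp [start] at hp; subst hp; simp
  | tail h hstep h3 ih => exact step_inv g m hdeg hstep ih
end

section
/- Let RS be any reachable state of the automaton A(G). If some reminder pair R_i of RS has R_i.Followup = ∅, then (R_i.Current, ∅) is the last reminder pair of RS. -/
theorem List.add_one_eq_length_of_forall_mem_dropLast {α : Type*} {P : α → Prop} {l : List α}
    (h : ∀ a ∈ l.dropLast, P a) {i : ℕ} (hi : i < l.length) (hPi : ¬ P l[i]) :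
    i + 1 = l.length := by
  by_contra hne
  have hi' : i < l.dropLast.length := by rw [List.length_dropLast]; omega
  exact hPi (List.getElem_dropLast (h := hi') ▸ h _ (List.getElem_mem hi'))

section

variable {T : Type*}

def NonemptyFollowupsBeforeLast (g : ContextFreeGrammar T) (RS : RSeq g) : Prop :=
  ∀ p ∈ RS.dropLast, p.2 ≠ 0

theorem nonemptyFollowupsBeforeLast_append_singleton {g : ContextFreeGrammar T}
    {RS : RSeq g} {q : RPair g} :
    NonemptyFollowupsBeforeLast g (RS ++ [q]) ↔ ∀ p ∈ RS, p.2 ≠ 0 := by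
  rw [NonemptyFollowupsBeforeLast, List.dropLast_concat]

theorem nonemptyFollowupsBeforeLast_append_pair {g : ContextFreeGrammar T}
    {RS : RSeq g} {p q : RPair g} :
    NonemptyFollowupsBeforeLast g (RS ++ [p, q]) ↔ (∀ p' ∈ RS, p'.2 ≠ 0) ∧ p.2 ≠ 0 := by
  rw [List.append_cons, nonemptyFollowupsBeforeLast_append_singleton]
  simp only [List.mem_append, List.mem_singleton, or_imp, forall_and, forall_eq]

/- A transition rewrites only the last one or two pairs, and the only pair it leaves in a
non-final position is `(A, v)` of rule (2), where `v ≠ ∅`. -/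
theorem Step.nonemptyFollowupsBeforeLast {g : ContextFreeGrammar T}
    [DecidableEq g.NT] {X Y : RSeq g} {w : List T} (h : Step g X w Y)
    (hX : NonemptyFollowupsBeforeLast g X) : NonemptyFollowupsBeforeLast g Y := by
  cases h with
  | extNe _ _ _ _ hv =>
    rw [nonemptyFollowupsBeforeLast_append_singleton] at hX
    exact nonemptyFollowupsBeforeLast_append_pair.2 ⟨hX, hv⟩
  | shorten =>
    rw [nonemptyFollowupsBeforeLast_append_pair] at hX
    exact nonemptyFollowupsBeforeLast_append_singleton.2 hX.1
  | _ => rwa [nonemptyFollowupsBeforeLast_append_singleton] at hX ⊢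

theorem Steps.nonemptyFollowupsBeforeLast {g : ContextFreeGrammar T}
    [DecidableEq g.NT] {X Y : RSeq g} {w : List T} (h : Steps g X w Y)
    (hX : NonemptyFollowupsBeforeLast g X) : NonemptyFollowupsBeforeLast g Y := by
  induction h with
  | refl => exact hX
  | tail _ hstep _ ih => exact hstep.nonemptyFollowupsBeforeLast ih

theorem ReachableState.nonemptyFollowupsBeforeLast {g : ContextFreeGrammar T}
    [DecidableEq g.NT] {RS : RSeq g} (hRS : ReachableState g RS) :
    NonemptyFollowupsBeforeLast g RS := by
  obtain ⟨w, hw⟩ := hRS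
  exact hw.nonemptyFollowupsBeforeLast (by simp [NonemptyFollowupsBeforeLast, start])

end

/-- In any reachable state `RS` of `A(G)`, a reminder pair with empty `Followup`
can only be the last pair of the sequence. -/
theorem empty_followup_is_last {T : Type*} (g : ContextFreeGrammar T)
    [DecidableEq g.NT] (RS : RSeq g) (hRS : ReachableState g RS) :
    ∀ (i : ℕ) (hi : i < RS.length), (RS.get ⟨i, hi⟩).2 = 0 → i + 1 = RS.length :=
  fun _ hi h0 =>
    List.add_one_eq_length_of_forall_mem_dropLast hRS.nonemptyFollowupsBeforeLast hi (· h0)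
end

section
/- Let RS = R₁⋯R_p be any reachable state of A(G). For all positions i < j and any variable A occurring in the j-th reminder pair (i.e., A = R_j.Current or R_j.Followup(A) ≥ 1), the variable R_i.Current reaches A: R_i.Current ⇒⁺ A in the reachability relation of G. -/
/-- The accessibility relation: `A → A′` iff `A′` occurs in the right-hand side of
some production of `A`. -/
def Accessible {T : Type*} (g : ContextFreeGrammar T) (A A' : g.NT) : Prop :=
  ∃ r ∈ g.rules, r.input = A ∧ A' ∈ ruleVars r

/-- The reachability relation `⇒⁺`: transitive closure of accessibility. -/
def Reaches {T : Type*} (g : ContextFreeGrammar T) : g.NT → g.NT → Prop :=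
  Relation.TransGen (Accessible g)

/-- One direction of the edge relation of the reminder graph: for every production
with at least two variable occurrences `A₁, …, A_r`, connect `Aᵢ` with `A_j` (for
distinct variables this is exactly `i ≠ j`), and connect `A′` with `A_j` whenever
`Aᵢ ⇒⁺ A′` and `A′ ≠ A_j`. -/
def RemEdge {T : Type*} (g : ContextFreeGrammar T) (X Y : g.NT) : Prop :=
  (∃ r ∈ g.rules, 2 ≤ (ruleVars r).length ∧ X ∈ ruleVars r ∧ Y ∈ ruleVars r) ∨
  (∃ r ∈ g.rules, 2 ≤ (ruleVars r).length ∧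
    ∃ Ai ∈ ruleVars r, Y ∈ ruleVars r ∧ Reaches g Ai X)

/-- The reminder graph `R(G)` of a context-free grammar, as a simple graph on the
variables. -/
def reminderGraph {T : Type*} (g : ContextFreeGrammar T) : SimpleGraph g.NT where
  Adj X Y := X ≠ Y ∧ (RemEdge g X Y ∨ RemEdge g Y X)
  symm := ⟨fun X Y h => ⟨h.1.symm, h.2.symm⟩⟩
  loopless := ⟨fun X h => h.1 rfl⟩

/-!
That the `Current` of each pair reaches every variable of each later pair is an invariant of
`A(G)`, trivially true for the one-pair initial state. A transition only rewrites the last one or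
two pairs, and the variables of the new last pair are either variables of the old last pair
(rules 4, 5) or right-hand-side variables of a production of its `Current` (rules 1, 2), hence one
accessibility step further; rule 3 leaves a pair without variables.
-/

def pairVars {N : Type*} (R : Option N × Multiset N) : Set N :=
  {A | R.1 = some A ∨ A ∈ R.2}

def CurrentReaches {T : Type*} (g : ContextFreeGrammar T) (p q : RPair g) : Prop :=
  ∀ B ∈ p.1, ∀ A ∈ pairVars q, Reaches g B A

theorem List.pairwise_append_singleton_iff {α : Type*} {R : α → α → Prop} {l : List α} {q : α} :
    (l ++ [q]).Pairwise R ↔ l.Pairwise R ∧ ∀ a ∈ l, R a q := by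
  simp [List.pairwise_append]

theorem List.Pairwise.replace_last {α : Type*} {R : α → α → Prop} {l : List α} {p q : α}
    (h : (l ++ [p]).Pairwise R) (hpq : ∀ a ∈ l, R a p → R a q) : (l ++ [q]).Pairwise R := by
  rw [List.pairwise_append_singleton_iff] at h ⊢
  exact ⟨h.1, fun a ha => hpq a ha (h.2 a ha)⟩

section CurrentReaches

variable {T : Type*} {g : ContextFreeGrammar T}

theorem accessible_of_mem_ruleVars {r : ContextFreeRule T g.NT} (hr : r ∈ g.rules) {A : g.NT}
    (hA : A ∈ ruleVars r) : Accessible g r.input A :=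
  ⟨r, hr, rfl, hA⟩

theorem accessible_of_mem_pairVars_erase [DecidableEq g.NT] {r : ContextFreeRule T g.NT}
    (hr : r ∈ g.rules) {Aj : g.NT} (hAj : Aj ∈ ruleVars r) :
    ∀ X ∈ pairVars ((some Aj, (ruleVars r : Multiset g.NT).erase Aj) : RPair g),
      Accessible g r.input X := by
  rintro X (hX | hX)
  · cases Option.some_injective _ hX
    exact accessible_of_mem_ruleVars hr hAj
  · exact accessible_of_mem_ruleVars hr (Multiset.mem_coe.1 (Multiset.mem_of_mem_erase hX))

theorem pairVars_some_subset_some_add {N : Type*} (A A' : N) (v : Multiset N) :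
    pairVars (some A', v) ⊆ pairVars (some A, v + {A'}) := by
  rintro X (hX | hX)
  · cases Option.some_injective _ hX
    simp [pairVars]
  · simp [pairVars, hX]

theorem CurrentReaches.of_subset {a p q : RPair g} (h : CurrentReaches g a p)
    (hqp : pairVars q ⊆ pairVars p) : CurrentReaches g a q :=
  fun B hB A hA => h B hB A (hqp hA)

theorem CurrentReaches.of_forall_accessible {a p q : RPair g} (h : CurrentReaches g a p)
    {A : g.NT} (hA : A ∈ pairVars p) (hq : ∀ X ∈ pairVars q, Accessible g A X) :
    CurrentReaches g a q :=
  fun B hB X hX => (h B hB A hA).tail (hq X hX)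

theorem currentReaches_some_of_forall_accessible {A : g.NT} {v : Multiset g.NT} {q : RPair g}
    (hq : ∀ X ∈ pairVars q, Accessible g A X) : CurrentReaches g (some A, v) q := by
  rintro B ⟨⟩ X hX
  exact .single (hq X hX)

theorem currentReaches_none (a : RPair g) : CurrentReaches g a (none, 0) := by
  rintro B - X (hX | hX) <;> simp at hX

theorem Step.pairwise_currentReaches [DecidableEq g.NT] {RS₁ RS₂ : RSeq g} {w : List T}
    (h : Step g RS₁ w RS₂) (hRS₁ : RS₁.Pairwise (CurrentReaches g)) :
    RS₂.Pairwise (CurrentReaches g) := by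
  cases h with
  | ext RS r hr Aj hAj =>
    exact hRS₁.replace_last fun a _ ha =>
      ha.of_forall_accessible (Or.inl rfl) (accessible_of_mem_pairVars_erase hr hAj)
  | extNe RS r hr _ _ Aj hAj =>
    have hacc := accessible_of_mem_pairVars_erase hr hAj
    rw [← List.singleton_append, ← List.append_assoc, List.pairwise_append_singleton_iff]
    refine ⟨hRS₁, fun a ha => ?_⟩
    rcases List.mem_append.1 ha with ha | ha
    · exact ((List.pairwise_append_singleton_iff.1 hRS₁).2 a ha).of_forall_accessible
        (Or.inl rfl) hacc
    · rw [List.mem_singleton.1 ha]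
      exact currentReaches_some_of_forall_accessible hacc
  | replE =>
    exact hRS₁.replace_last fun a _ _ => currentReaches_none a
  | replNe =>
    exact hRS₁.replace_last fun a _ ha => ha.of_subset (pairVars_some_subset_some_add _ _ _)
  | shorten RS A v A' =>
    have hprefix : (RS ++ [(some A, v + {A'})]).Pairwise (CurrentReaches g) :=
      hRS₁.sublist (by simp)
    exact hprefix.replace_last fun a _ ha => ha.of_subset (pairVars_some_subset_some_add _ _ _)

theorem Steps.pairwise_currentReaches [DecidableEq g.NT] {RS₁ RS₂ : RSeq g} {w : List T}
    (h : Steps g RS₁ w RS₂) (hRS₁ : RS₁.Pairwise (CurrentReaches g)) :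
    RS₂.Pairwise (CurrentReaches g) := by
  induction h with
  | refl => exact hRS₁
  | tail _ hstep _ ih => exact hstep.pairwise_currentReaches ih

theorem ReachableState.pairwise_currentReaches [DecidableEq g.NT] {RS : RSeq g}
    (hRS : ReachableState g RS) : RS.Pairwise (CurrentReaches g) := by
  obtain ⟨w, hw⟩ := hRS
  exact hw.pairwise_currentReaches (List.pairwise_singleton _ _)

end CurrentReaches

/-- In any reachable state `RS = R₁⋯R_p` of `A(G)`: for positions `i < j` and any
variable `A` occurring in the `j`-th reminder pair (as its `Current` or with
positive multiplicity in its `Followup`), the `Current` variable of the `i`-th pair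
reaches `A` via `⇒⁺`. -/
theorem current_reaches_later_variables {T : Type*} (g : ContextFreeGrammar T)
    [DecidableEq g.NT] (RS : RSeq g) (hRS : ReachableState g RS) :
    ∀ (i j : ℕ) (hi : i < RS.length) (hj : j < RS.length), i < j →
      ∀ A : g.NT, ((RS.get ⟨j, hj⟩).1 = some A ∨ A ∈ (RS.get ⟨j, hj⟩).2) →
        ∀ B : g.NT, (RS.get ⟨i, hi⟩).1 = some B → Reaches g B A := by
  intro i j hi hj hij A hA B hB
  exact List.pairwise_iff_get.1 hRS.pairwise_currentReaches ⟨i, hi⟩ ⟨j, hj⟩ hij B hB A hA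
end

section
/- For a CFG G with regularity width d (treewidth of the reminder graph plus one), every reachable state RS of A(G) has length at most 2d, and the set of variables occurring in RS has size at most d. -/
/-- A tree decomposition of a graph `H`. -/
structure IsTreeDecomposition {V : Type*} {ι : Type*} (H : SimpleGraph V)
    (T : SimpleGraph ι) (B : ι → Set V) : Prop where
  isTree : T.IsTree
  support_connected : ∀ v : V, (T.induce {η | v ∈ B η}).Connected
  edge_mem : ∀ ⦃u v : V⦄, H.Adj u v → ∃ η, u ∈ B η ∧ v ∈ B η

/-- `H` has a tree decomposition of width at most `k`. -/
def TreewidthLE {V : Type*} (H : SimpleGraph V) (k : ℕ) : Prop :=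
  ∃ (ι : Type) (T : SimpleGraph ι) (B : ι → Set V),
    IsTreeDecomposition H T B ∧ ∀ η, (B η).Finite ∧ (B η).ncard ≤ k + 1

/-- The treewidth of `H` (as an extended natural number, `⊤` if no decomposition of
finite width exists). -/
noncomputable def treewidth {V : Type*} (H : SimpleGraph V) : ℕ∞ :=
  sInf ((↑) '' {k : ℕ | TreewidthLE H k})

/-- The set of variables occurring in a reminder sequence. -/
def stateVars {T : Type*} (g : ContextFreeGrammar T) (RS : RSeq g) : Set g.NT :=
  {A | ∃ p ∈ RS, p.1 = some A ∨ A ∈ p.2}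

/-! The variables of a reachable state form a clique of the reminder graph: along a run, every
variable occurring before a pending variable `B` (a followup, or the last Current component)
occurs in a production with at least two variable occurrences next to an ancestor of `B`, and
this is what makes it adjacent to `B`. A finite clique lies in a single bag of any tree
decomposition, by the Helly property of subtrees, so it has at most `d` elements. Every
variable is Current at most twice and only the last pair can have Current component `⊥`; the
only step that lengthens a state, (2), produces a state without `⊥`, hence of length at most
`2d`. -/

namespace SimpleGraph

variable {V : Type*} {G : SimpleGraph V} {A B C D : Set V}

lemma Preconnected.exists_walk_support_subset (hA : (G.induce A).Preconnected) {a b : V}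
    (ha : a ∈ A) (hb : b ∈ A) : ∃ p : G.Walk a b, ∀ x ∈ p.support, x ∈ A := by
  obtain ⟨p⟩ := hA ⟨a, ha⟩ ⟨b, hb⟩
  refine ⟨p.map (Embedding.induce A).toHom, fun x hx => ?_⟩
  obtain ⟨y, -, rfl⟩ := List.mem_map.mp (p.support_map _ ▸ hx)
  exact y.2

lemma IsAcyclic.support_subset_of_isPath (hG : G.IsAcyclic) (hA : (G.induce A).Preconnected)
    {a b : V} (ha : a ∈ A) (hb : b ∈ A) {p : G.Walk a b} (hp : p.IsPath) :
    ∀ x ∈ p.support, x ∈ A := by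
  classical
  obtain ⟨q, hq⟩ := hA.exists_walk_support_subset ha hb
  obtain rfl : p = q.bypass := congrArg Subtype.val
    ((hG.subsingleton_path a b).elim ⟨p, hp⟩ ⟨q.bypass, q.bypass_isPath⟩)
  exact fun x hx => hq x (q.support_bypass_subset_support hx)

lemma IsAcyclic.preconnected_induce_inter (hG : G.IsAcyclic) (hA : (G.induce A).Preconnected)
    (hB : (G.induce B).Preconnected) : (G.induce (A ∩ B)).Preconnected := by
  classical
  rintro ⟨x, hxA, hxB⟩ ⟨y, hyA, hyB⟩
  obtain ⟨q, hq⟩ := hA.exists_walk_support_subset hxA hyA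
  have hsub : ∀ z ∈ q.bypass.support, z ∈ A ∩ B := fun z hz =>
    ⟨hq z (q.support_bypass_subset_support hz),
      hG.support_subset_of_isPath hB hxB hyB q.bypass_isPath z hz⟩
  exact ⟨q.bypass.induce _ hsub⟩

/-- Every edge of a forest is a bridge, and a walk from `u` to `v` through `A ∩ B`
would avoid the edge `uv`. -/
lemma IsAcyclic.not_adj_of_mem_diff (hG : G.IsAcyclic) (hA : (G.induce A).Preconnected)
    (hB : (G.induce B).Preconnected) {y u v : V} (hy : y ∈ A ∩ B) (hu : u ∈ A \ B)
    (hv : v ∈ B \ A) : ¬ G.Adj u v := by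
  intro huv
  obtain ⟨p, hp⟩ := hA.exists_walk_support_subset hu.1 hy.1
  obtain ⟨q, hq⟩ := hB.exists_walk_support_subset hy.2 hv.1
  have hmem := isBridge_iff_forall_walk_mem_edges.mp
    (isAcyclic_iff_forall_adj_isBridge.mp hG huv) (p.append q)
  rcases List.mem_append.mp (Walk.edges_append p q ▸ hmem) with h | h
  · exact hv.2 (hp v (p.snd_mem_support_of_mem_edges h))
  · exact hu.2 (hq u (q.fst_mem_support_of_mem_edges h))

/-- The path from a point of `B ∩ C` to a point of `A ∩ C` runs inside `C` and inside
`A ∪ B`; where it leaves `B` it must pass through `A ∩ B`. -/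
lemma IsAcyclic.inter_inter_nonempty (hG : G.IsAcyclic) (hA : (G.induce A).Preconnected)
    (hB : (G.induce B).Preconnected) (hC : (G.induce C).Preconnected)
    (hAB : (A ∩ B).Nonempty) (hAC : (A ∩ C).Nonempty) (hBC : (B ∩ C).Nonempty) :
    (A ∩ B ∩ C).Nonempty := by
  classical
  obtain ⟨c, hcA, hcB⟩ := hAB
  obtain ⟨b, hbA, hbC⟩ := hAC
  obtain ⟨a, haB, haC⟩ := hBC
  obtain ⟨q, hq⟩ := hB.exists_walk_support_subset haB hcB
  obtain ⟨r, hr⟩ := hA.exists_walk_support_subset hcA hbA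
  set p := (q.append r).bypass
  have hpC := hG.support_subset_of_isPath hC haC hbC (q.append r).bypass_isPath
  have hpAB : ∀ x ∈ p.support, x ∈ A ∨ x ∈ B := fun x hx => by
    rcases (Walk.mem_support_append_iff q r).mp ((q.append r).support_bypass_subset_support hx)
      with h | h
    exacts [Or.inr (hq x h), Or.inl (hr x h)]
  by_contra hABC
  have hbB : b ∉ B := fun h => hABC ⟨b, ⟨hbA, h⟩, hbC⟩
  obtain ⟨d, hd, hdB, hdB'⟩ := p.exists_boundary_dart B haB hbB
  have hdA : d.snd ∈ A := (hpAB _ (p.dart_snd_mem_support_of_mem_darts hd)).resolve_right hdB'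
  have hdA' : d.fst ∉ A := fun h =>
    hABC ⟨d.fst, ⟨h, hdB⟩, hpC _ (p.dart_fst_mem_support_of_mem_darts hd)⟩
  exact hG.not_adj_of_mem_diff hA hB ⟨hcA, hcB⟩ ⟨hdA, hdB'⟩ ⟨hdB, hdA'⟩ d.adj.symm

/-- Helly property of subtrees, strengthened by the extra subtree `D` so that the induction
can intersect `D` with one member of the family at a time. -/
theorem IsAcyclic.exists_mem_forall_mem (hG : G.IsAcyclic) {κ : Type*} (s : Finset κ)
    (f : κ → Set V) (hf : ∀ k ∈ s, (G.induce (f k)).Preconnected)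
    (hs : ∀ k ∈ s, ∀ l ∈ s, (f k ∩ f l).Nonempty) (hD : (G.induce D).Preconnected)
    (hDne : D.Nonempty) (hDs : ∀ k ∈ s, (D ∩ f k).Nonempty) :
    ∃ x ∈ D, ∀ k ∈ s, x ∈ f k := by
  classical
  induction s using Finset.induction_on generalizing D with
  | empty => simpa [Set.Nonempty] using hDne
  | insert a s _ ih =>
    simp only [Finset.mem_insert, forall_eq_or_imp] at hf hs hDs
    obtain ⟨x, ⟨hxD, hxa⟩, hxs⟩ := ih hf.2 (fun k hk l hl => (hs.2 k hk).2 l hl)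
      (hG.preconnected_induce_inter hD hf.1) hDs.1 fun k hk =>
        hG.inter_inter_nonempty hD hf.1 (hf.2 k hk) hDs.1 (hDs.2 k hk) (hs.1.2 k hk)
    exact ⟨x, hxD, by simpa [hxa] using hxs⟩

lemma IsClique.ncard_le_of_cliqueFree {S : Set V} {n : ℕ} (hS : G.IsClique S) (hfin : S.Finite)
    (hG : G.CliqueFree (n + 1)) : S.ncard ≤ n := by
  by_contra! hn
  rw [Set.ncard_eq_toFinset_card S hfin] at hn
  obtain ⟨t, hts, htcard⟩ := Finset.exists_subset_card_eq hn
  exact hG t ⟨hS.subset (by simpa [Set.subset_def] using hts), htcard⟩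

end SimpleGraph

section TreeDecomposition

variable {V ι : Type*} {H : SimpleGraph V} {T : SimpleGraph ι} {B : ι → Set V}

theorem IsTreeDecomposition.exists_subset_bag (htd : IsTreeDecomposition H T B)
    {s : Finset V} (hs : H.IsClique (s : Set V)) : ∃ η, (s : Set V) ⊆ B η := by
  have hbags : ∀ v, {η | v ∈ B η}.Nonempty := fun v =>
    Set.nonempty_coe_sort.mp (htd.support_connected v).nonempty
  have huniv : (T.induce Set.univ).Preconnected := by
    rintro ⟨x, -⟩ ⟨y, -⟩
    obtain ⟨p⟩ := htd.isTree.connected.preconnected x y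
    exact ⟨p.induce _ fun _ _ => trivial⟩
  obtain ⟨η, -, hη⟩ := htd.isTree.isAcyclic.exists_mem_forall_mem s (fun v => {η | v ∈ B η})
    (fun v _ => (htd.support_connected v).preconnected)
    (fun v hv w hw => by
      rcases eq_or_ne v w with rfl | hvw
      · simpa using hbags v
      · exact htd.edge_mem (hs hv hw hvw))
    huniv (Set.nonempty_iff_univ_nonempty.mp htd.isTree.connected.nonempty)
    (fun v _ => by simpa using hbags v)
  exact ⟨η, hη⟩

lemma treewidthLE_of_treewidth_eq {k : ℕ} (h : treewidth H = k) : TreewidthLE H k := by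
  have hne : (((↑) : ℕ → ℕ∞) '' {k | TreewidthLE H k}).Nonempty := by
    by_contra hemp
    simp [treewidth, Set.not_nonempty_iff_eq_empty.mp hemp] at h
  obtain ⟨k', hk', hk'k⟩ := csInf_mem hne
  rw [← treewidth, h, Nat.cast_inj] at hk'k
  exact hk'k ▸ hk'

theorem cliqueFree_of_treewidthLE {k : ℕ} (h : TreewidthLE H k) : H.CliqueFree (k + 2) := by
  obtain ⟨_, _, _, htd, hB⟩ := h
  intro s hs
  obtain ⟨η, hη⟩ := htd.exists_subset_bag hs.isClique
  have := Set.ncard_le_ncard hη (hB η).1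
  rw [Set.ncard_coe_finset, hs.card_eq] at this
  linarith [(hB η).2]

theorem cliqueFree_of_treewidth_add_one_eq {d : ℕ} (hd : treewidth H + 1 = d) :
    H.CliqueFree (d + 1) := by
  obtain ⟨k, hk⟩ : ∃ k : ℕ, (k : ℕ∞) = treewidth H := ENat.ne_top_iff_exists.mp fun htop => by
    rw [htop, top_add] at hd
    exact ENat.top_ne_natCast d hd
  obtain rfl : k + 1 = d := by rw [← hk] at hd; exact_mod_cast hd
  exact cliqueFree_of_treewidthLE (treewidthLE_of_treewidth_eq hk.symm)

end TreeDecomposition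

lemma List.two_le_length_of_mem_of_ne {α : Type*} {l : List α} {a b : α} (ha : a ∈ l)
    (hb : b ∈ l) (hab : a ≠ b) : 2 ≤ l.length := by
  rcases l with _ | ⟨x, _ | ⟨y, l⟩⟩ <;> simp_all

lemma List.length_le_mul_card_toFinset {α : Type*} [DecidableEq α] {l : List α} {k : ℕ}
    (h : ∀ a ∈ l, l.count a ≤ k) : l.length ≤ k * l.toFinset.card := by
  rw [← List.sum_toFinset_count_eq_length, mul_comm, ← smul_eq_mul]
  exact Finset.sum_le_card_nsmul _ _ _ fun a ha => h a (List.mem_toFinset.mp ha)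

lemma Multiset.two_le_card_of_mem_erase {α : Type*} [DecidableEq α] {s : Multiset α} {a b : α}
    (ha : a ∈ s) (hb : b ∈ s.erase a) : 2 ≤ Multiset.card s := by
  have := Multiset.card_pos_iff_exists_mem.mpr ⟨b, hb⟩
  rw [Multiset.card_erase_of_mem ha, Nat.pred_eq_sub_one] at this
  omega

section Grammar

variable {T : Type*} {g : ContextFreeGrammar T}

def SiblingOfAncestor (g : ContextFreeGrammar T) (X Z : g.NT) : Prop :=
  ∃ r ∈ g.rules, 2 ≤ (ruleVars r).length ∧ X ∈ ruleVars r ∧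
    ∃ Ai ∈ ruleVars r, Relation.ReflTransGen (Accessible g) Ai Z

namespace SiblingOfAncestor

variable {X Y Z : g.NT}

lemma of_mem {r : ContextFreeRule T g.NT} (hr : r ∈ g.rules) (hlen : 2 ≤ (ruleVars r).length)
    (hX : X ∈ ruleVars r) (hZ : Z ∈ ruleVars r) : SiblingOfAncestor g X Z :=
  ⟨r, hr, hlen, hX, Z, hZ, .refl⟩

lemma tail (h : SiblingOfAncestor g X Z) (hZY : Accessible g Z Y) : SiblingOfAncestor g X Y :=
  let ⟨r, hr, hlen, hX, Ai, hAi, hAiZ⟩ := h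
  ⟨r, hr, hlen, hX, Ai, hAi, hAiZ.tail hZY⟩

lemma self (h : SiblingOfAncestor g X Z) : SiblingOfAncestor g X X :=
  let ⟨_, hr, hlen, hX, _⟩ := h
  of_mem hr hlen hX hX

lemma adj (h : SiblingOfAncestor g X Y) (hne : X ≠ Y) : (reminderGraph g).Adj X Y := by
  obtain ⟨r, hr, hlen, hX, Ai, hAi, hAiY⟩ := h
  refine ⟨hne, ?_⟩
  rcases Relation.reflTransGen_iff_eq_or_transGen.mp hAiY with rfl | hreach
  · exact Or.inl (Or.inl ⟨r, hr, hlen, hX, hAi⟩)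
  · exact Or.inr (Or.inr ⟨r, hr, hlen, Ai, hAi, hX, hreach⟩)

end SiblingOfAncestor

lemma stateVars_append_singleton (P : RSeq g) (c : Option g.NT) (v : Multiset g.NT) :
    stateVars g (P ++ [(c, v)]) = stateVars g P ∪ {X | c = some X ∨ X ∈ v} := by
  ext X
  simp [stateVars, or_and_right, exists_or]

lemma stateVars_subset_append (P Q : RSeq g) : stateVars g P ⊆ stateVars g (P ++ Q) :=
  fun _ ⟨p, hp, h⟩ => ⟨p, List.mem_append_left Q hp, h⟩

lemma stateVars_finite (RS : RSeq g) : (stateVars g RS).Finite := by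
  classical
  refine (RS.toFinset.biUnion fun p => p.1.toFinset ∪ p.2.toFinset).finite_toSet.subset ?_
  rintro X ⟨p, hp, h | h⟩ <;> simp only [Finset.coe_biUnion, Set.mem_iUnion]
  all_goals exact ⟨p, List.mem_toFinset.mpr hp, by simp [h]⟩

lemma length_le_two_mul_ncard_stateVars [DecidableEq g.NT] {RS : RSeq g} (hok : Ok g RS)
    (hsome : ∀ p ∈ RS, p.1.isSome) : RS.length ≤ 2 * (stateVars g RS).ncard := by
  set cs := RS.filterMap Prod.fst
  have hlen : cs.length = RS.length := by
    rw [List.length_filterMap_eq_countP, List.countP_eq_length]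
    simpa using hsome
  have hsub : (cs.toFinset : Set g.NT) ⊆ stateVars g RS := fun X hX => by
    obtain ⟨p, hp, hpX⟩ := List.mem_filterMap.mp (List.mem_toFinset.mp hX)
    exact ⟨p, hp, Or.inl hpX⟩
  calc RS.length = cs.length := hlen.symm
    _ ≤ 2 * cs.toFinset.card := cs.length_le_mul_card_toFinset fun A _ => by
        rw [List.count_filterMap]
        simpa [List.count, List.countP_map, Function.comp_def] using hok A
    _ ≤ 2 * (stateVars g RS).ncard := by
        rw [← Set.ncard_coe_finset]
        exact Nat.mul_le_mul_left 2 (Set.ncard_le_ncard hsub (stateVars_finite RS))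

end Grammar


section Invariant

variable {T : Type*} {g : ContextFreeGrammar T} [DecidableEq g.NT]

def FollowupInv (g : ContextFreeGrammar T) [DecidableEq g.NT] (P : RSeq g) (c : Option g.NT)
    (v : Multiset g.NT) : Prop :=
  ∀ B ∈ v, ∀ X, X ∈ stateVars g P ∨ c = some X ∨ X ∈ v.erase B → SiblingOfAncestor g X B

def CurrentInv (g : ContextFreeGrammar T) (P : RSeq g) (A : g.NT) (v : Multiset g.NT) : Prop :=
  ∀ X, X ∈ stateVars g P ∨ X ∈ v → SiblingOfAncestor g X A

def FollowupsInv (g : ContextFreeGrammar T) [DecidableEq g.NT] (RS : RSeq g) : Prop :=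
  ∀ P c v, P ++ [(c, v)] <+: RS → FollowupInv g P c v

lemma followupsInv_append_singleton {P : RSeq g} {c : Option g.NT} {v : Multiset g.NT} :
    FollowupsInv g (P ++ [(c, v)]) ↔ FollowupsInv g P ∧ FollowupInv g P c v := by
  refine ⟨fun h => ⟨fun P' c' v' hP' => h P' c' v' (hP'.trans (List.prefix_append _ _)),
    h P c v (List.prefix_refl _)⟩, fun ⟨hP, hcv⟩ P' c' v' hP' => ?_⟩
  rcases List.prefix_concat_iff.mp hP' with heq | hP'
  · obtain ⟨rfl, ⟨⟩⟩ := List.append_singleton_inj.mp heq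
    exact hcv
  · exact hP P' c' v' hP'

structure StateInv (g : ContextFreeGrammar T) [DecidableEq g.NT] (RS : RSeq g) : Prop where
  isClique : (reminderGraph g).IsClique (stateVars g RS)
  followups : FollowupsInv g RS
  current : ∀ P A v, RS = P ++ [(some A, v)] → CurrentInv g P A v
  isSome_of_mem_dropLast : ∀ p ∈ RS.dropLast, p.1.isSome

lemma stateInv_start : StateInv g (start g) where
  isClique := by
    refine Set.Subsingleton.pairwise ?_ _
    rintro X ⟨p, hp, hX | hX⟩ Y ⟨q, hq, hY | hY⟩ <;> simp_all [start]
  followups := followupsInv_append_singleton (P := []).mpr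
    ⟨fun _ _ _ h => by simp at h, fun B hB => absurd hB (Multiset.notMem_zero B)⟩
  current := by
    intro P A v h
    obtain ⟨rfl, ⟨⟩⟩ := List.append_singleton_inj.mp (show [] ++ _ = _ from h)
    simp [CurrentInv, stateVars]
  isSome_of_mem_dropLast := by simp [start]

/-- Steps (1) and (2) of `A(G)`, with `L` the part of the state they keep. -/
lemma stateInv_expand {L : RSeq g} {r : ContextFreeRule T g.NT} (hr : r ∈ g.rules) {Aj : g.NT}
    (hAj : Aj ∈ ruleVars r) (hclique : (reminderGraph g).IsClique (stateVars g L))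
    (hfoll : FollowupsInv g L) (hsib : ∀ X ∈ stateVars g L, SiblingOfAncestor g X r.input)
    (hsome : ∀ p ∈ L, p.1.isSome) :
    StateInv g (L ++ [(some Aj, (ruleVars r : Multiset g.NT).erase Aj)]) := by
  set m := (ruleVars r : Multiset g.NT).erase Aj
  have hm : ∀ {X}, X ∈ m → X ∈ ruleVars r := fun hX =>
    Multiset.mem_coe.mp (Multiset.mem_of_mem_erase hX)
  have hnew : ∀ {X}, some Aj = some X ∨ X ∈ m → X ∈ ruleVars r := by
    rintro X (hX | hX)
    exacts [Option.some_injective _ hX ▸ hAj, hm hX]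
  have hbranch : ∀ {B}, B ∈ m → 2 ≤ (ruleVars r).length := fun hB =>
    Multiset.two_le_card_of_mem_erase (Multiset.mem_coe.mpr hAj) hB
  have hold : ∀ X ∈ stateVars g L, ∀ Y ∈ ruleVars r, SiblingOfAncestor g X Y :=
    fun X hX Y hY => (hsib X hX).tail ⟨r, hr, rfl, hY⟩
  refine ⟨?_, ?_, ?_, by simpa using hsome⟩
  · rw [stateVars_append_singleton, SimpleGraph.IsClique,
      @Set.pairwise_union_of_symm _ _ _ _ (reminderGraph g).symm]
    refine ⟨hclique, fun X hX Y hY hXY => ?_, fun X hX Y hY hXY => (hold X hX Y (hnew hY)).adj hXY⟩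
    exact (SiblingOfAncestor.of_mem hr
      ((ruleVars r).two_le_length_of_mem_of_ne (hnew hX) (hnew hY) hXY) (hnew hX) (hnew hY)).adj hXY
  · refine followupsInv_append_singleton.mpr ⟨hfoll, fun B hB X hX => ?_⟩
    rcases hX with hX | hX | hX
    · exact hold X hX B (hm hB)
    · exact SiblingOfAncestor.of_mem hr (hbranch hB) (hnew (Or.inl hX)) (hm hB)
    · exact SiblingOfAncestor.of_mem hr (hbranch hB) (hm (Multiset.mem_of_mem_erase hX)) (hm hB)
  · intro P A v h
    obtain ⟨rfl, ⟨⟩⟩ := List.append_singleton_inj.mp h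
    rintro X (hX | hX)
    exacts [hold X hX Aj hAj, SiblingOfAncestor.of_mem hr (hbranch hX) (hm hX) hAj]

/-- Steps (4) and (5) of `A(G)`, with `L` the part of the state they keep. -/
lemma stateInv_pop {L : RSeq g} {c : Option g.NT} {v : Multiset g.NT} {A' : g.NT}
    (hclique : (reminderGraph g).IsClique (stateVars g (L ++ [(c, v + {A'})])))
    (hfoll : FollowupsInv g (L ++ [(c, v + {A'})])) (hsome : ∀ p ∈ L, p.1.isSome) :
    StateInv g (L ++ [(some A', v)]) := by
  obtain ⟨hfollL, hcv⟩ := followupsInv_append_singleton.mp hfoll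
  refine ⟨hclique.subset ?_, followupsInv_append_singleton.mpr ⟨hfollL, ?_⟩, ?_,
    by simpa using hsome⟩
  · rw [stateVars_append_singleton, stateVars_append_singleton]
    rintro X (hX | hX | hX)
    exacts [Or.inl hX, Or.inr (Or.inr (by simp_all)), Or.inr (Or.inr (by simp [hX]))]
  · intro B hB X hX
    refine hcv B (by simp [hB]) X ?_
    rw [Multiset.erase_add_left_pos _ hB]
    rcases hX with hX | hX | hX
    exacts [Or.inl hX, Or.inr (Or.inr (by simp_all)), Or.inr (Or.inr (by simp [hX]))]
  · intro P A v' h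
    obtain ⟨rfl, ⟨⟩⟩ := List.append_singleton_inj.mp h
    rintro X (hX | hX)
    exacts [hcv A' (by simp) X (Or.inl hX), hcv A' (by simp) X
      (Or.inr (Or.inr (by rwa [Multiset.erase_add_right_pos _ (Multiset.mem_singleton_self A'),
        Multiset.erase_singleton, add_zero])))]

end Invariant

section Run

variable {T : Type*} {g : ContextFreeGrammar T} [DecidableEq g.NT]

theorem Step.stateInv {RS RS' : RSeq g} {w : List T} (h : Step g RS w RS')
    (hRS : StateInv g RS) : StateInv g RS' := by
  cases h with
  | ext L r hr Aj hAj =>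
    exact stateInv_expand hr hAj (hRS.isClique.subset (stateVars_subset_append _ _))
      (followupsInv_append_singleton.mp hRS.followups).1
      (fun X hX => hRS.current L r.input 0 rfl X (Or.inl hX))
      (by simpa using hRS.isSome_of_mem_dropLast)
  | extNe L r hr v hv Aj hAj =>
    obtain ⟨B, hB⟩ := Multiset.exists_mem_of_ne_zero hv
    have hA : SiblingOfAncestor g r.input r.input :=
      ((followupsInv_append_singleton.mp hRS.followups).2 B hB r.input (Or.inr (Or.inl rfl))).self
    rw [List.append_cons]
    refine stateInv_expand hr hAj hRS.isClique hRS.followups ?_ ?_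
    · rw [stateVars_append_singleton]
      rintro X (hX | hX | hX)
      · exact hRS.current L _ v rfl X (Or.inl hX)
      · exact Option.some_injective _ hX ▸ hA
      · exact hRS.current L _ v rfl X (Or.inr hX)
    · simpa [or_imp, forall_and] using hRS.isSome_of_mem_dropLast
  | replE =>
    refine ⟨hRS.isClique.subset ?_,
      followupsInv_append_singleton.mpr ⟨(followupsInv_append_singleton.mp hRS.followups).1,
        fun B hB => absurd hB (Multiset.notMem_zero B)⟩, fun P A v h => ?_,
      by simpa using hRS.isSome_of_mem_dropLast⟩
    · simp [stateVars_append_singleton]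
    · simp at h
  | replNe =>
    exact stateInv_pop hRS.isClique hRS.followups (by simpa using hRS.isSome_of_mem_dropLast)
  | shorten =>
    rw [List.append_cons] at hRS
    exact stateInv_pop (hRS.isClique.subset (stateVars_subset_append _ _))
      (followupsInv_append_singleton.mp hRS.followups).1
      (fun p hp => hRS.isSome_of_mem_dropLast p (by simp [hp]))

theorem Steps.stateInv {RS RS' : RSeq g} {w : List T} (h : Steps g RS w RS')
    (hRS : StateInv g RS) : StateInv g RS' := by
  induction h with
  | refl => exact hRS
  | tail _ hstep _ ih => exact hstep.stateInv ih

theorem ReachableState.stateInv {RS : RSeq g} (h : ReachableState g RS) : StateInv g RS :=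
  h.choose_spec.stateInv stateInv_start

theorem Steps.length_le {d : ℕ} (hG : (reminderGraph g).CliqueFree (d + 1)) {RS RS' : RSeq g}
    {w : List T} (h : Steps g RS w RS') (hRS : StateInv g RS) (hlen : RS.length ≤ 2 * d) :
    RS'.length ≤ 2 * d := by
  induction h with
  | refl => exact hlen
  | tail hsteps hstep hok ih =>
    have hinv := hstep.stateInv (hsteps.stateInv hRS)
    cases hstep with
    | extNe =>
      -- the only step that lengthens the sequence; it leaves no `⊥` behind
      calc _ ≤ 2 * (stateVars g _).ncard := length_le_two_mul_ncard_stateVars hok fun p hp => by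
            simp only [List.mem_append, List.mem_cons, List.not_mem_nil, or_false] at hp
            rcases hp with hp | rfl | rfl
            exacts [hinv.isSome_of_mem_dropLast p (by simp [hp]), rfl, rfl]
        _ ≤ 2 * d := by
            gcongr
            exact hinv.isClique.ncard_le_of_cliqueFree (stateVars_finite _) hG
    | shorten => simp only [List.length_append, List.length_cons] at ih ⊢; omega
    | _ => simpa using ih

theorem ReachableState.length_le {d : ℕ} (hG : (reminderGraph g).CliqueFree (d + 1))
    {RS : RSeq g} (h : ReachableState g RS) : RS.length ≤ 2 * d := by
  have hd : d ≠ 0 := by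
    rintro rfl
    exact (SimpleGraph.cliqueFree_one.mp hG).false g.initial
  exact h.choose_spec.length_le hG stateInv_start (by simp only [start, List.length_singleton]; omega)

end Run

/-- For a grammar `G` of regularity width `d` (treewidth of the reminder graph plus
one), every reachable state of `A(G)` has length at most `2d` and its set of
occurring variables has size at most `d`. -/
theorem state_length_le {T : Type*} (g : ContextFreeGrammar T)
    [DecidableEq g.NT] (d : ℕ)
    (hd : treewidth (reminderGraph g) + 1 = (d : ℕ∞))
    (RS : RSeq g) (hRS : ReachableState g RS) :
    RS.length ≤ 2 * d ∧ (stateVars g RS).Finite ∧ (stateVars g RS).ncard ≤ d := by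
  have hG := cliqueFree_of_treewidth_add_one_eq hd
  exact ⟨hRS.length_le hG, stateVars_finite RS,
    hRS.stateInv.isClique.ncard_le_of_cliqueFree (stateVars_finite RS) hG⟩
end

section
/- If the automaton A(G) accepts a word w (i.e., (S,∅) ⟹* (⊥,∅) reading w), then the grammar G generates some word w′ from its axiom S with Π(w′) = Π(w). -/
section Aux
variable {T : Type*}

def nmL {N : Type*} (α : List (Symbol T N)) : List N :=
  α.filterMap (fun s => match s with
    | Symbol.nonterminal B => some B
    | _ => none)

def tms {N : Type*} (α : List (Symbol T N)) : List T :=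
  α.filterMap (fun s => match s with
    | Symbol.terminal a => some a
    | _ => none)

lemma nmL_append {N : Type*} (α β : List (Symbol T N)) :
    nmL (α ++ β) = nmL α ++ nmL β := List.filterMap_append ..

lemma tms_append {N : Type*} (α β : List (Symbol T N)) :
    tms (α ++ β) = tms α ++ tms β := List.filterMap_append ..

lemma mem_nmL {N : Type*} {A : N} {α : List (Symbol T N)} :
    A ∈ nmL α ↔ Symbol.nonterminal A ∈ α := by
  simp only [nmL, List.mem_filterMap]
  constructor
  · rintro ⟨s, hs, h⟩; cases s <;> simp_all
  · intro h; exact ⟨_, h, rfl⟩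

lemma eq_map_tms {N : Type*} {α : List (Symbol T N)} (h : nmL α = []) :
    α = (tms α).map Symbol.terminal := by
  induction α with
  | nil => rfl
  | cons s l ih =>
    cases s with
    | terminal a =>
      simp only [nmL, List.filterMap_cons] at h
      simp only [tms, List.filterMap_cons, List.map_cons]
      exact congrArg _ (ih h)
    | nonterminal B => simp [nmL, List.filterMap_cons] at h

/-- Applying a production to any occurrence of its input nonterminal. -/
lemma produce [DecidableEq T] {g : ContextFreeGrammar T} [DecidableEq g.NT] {r : ContextFreeRule T g.NT}
    (hr : r ∈ g.rules) {α : List (Symbol T g.NT)}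
    (hA : Symbol.nonterminal r.input ∈ α) :
    ∃ β, g.Produces α β ∧
      (nmL β : Multiset g.NT) + {r.input} = (nmL α : Multiset g.NT) + ↑(ruleVars r) ∧
      ∀ σ : T, (tms β).count σ = (tms α).count σ + (ruleTerms r).count σ := by
  obtain ⟨p, q, rfl⟩ := List.append_of_mem hA
  refine ⟨p ++ r.output ++ q, ⟨r, hr, ?_⟩, ?_, ?_⟩
  · have := r.rewrites_of_exists_parts p q
    simpa using this
  · have h1 : nmL (p ++ r.output ++ q) = nmL p ++ ruleVars r ++ nmL q := by
      rw [nmL_append, nmL_append]; rfl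
    have h2 : nmL (p ++ Symbol.nonterminal r.input :: q) = nmL p ++ r.input :: nmL q := by
      rw [nmL_append]; rfl
    rw [h1, h2]
    refine Multiset.ext.mpr fun a => ?_
    simp [Multiset.count_add, Multiset.coe_count, Multiset.count_singleton,
      List.count_append, List.count_cons]
    split <;> simp_all [eq_comm] <;> omega
  · intro σ
    have h1 : tms (p ++ r.output ++ q) = tms p ++ ruleTerms r ++ tms q := by
      rw [tms_append, tms_append]; rfl
    have h2 : tms (p ++ Symbol.nonterminal r.input :: q) = tms p ++ tms q := by
      rw [tms_append]; rfl
    rw [h1, h2]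
    simp [List.count_append]
    ring

end Aux

/-- Contribution of the `Current` component of a reminder pair. -/
def curM {T : Type*} {g : ContextFreeGrammar T} : RPair g → Multiset g.NT
  | (some A, _) => {A}
  | (none, _) => 0

/-- The multiset of "pending" nonterminals encoded by a reminder sequence:
all followups, plus the current variable of the last pair. -/
def sM {T : Type*} {g : ContextFreeGrammar T} (RS : RSeq g) : Multiset g.NT :=
  (RS.map Prod.snd).sum + (RS.getLast?.elim 0 curM)

lemma sM_concat {T : Type*} {g : ContextFreeGrammar T} (RS : RSeq g) (p : RPair g) :
    sM (RS ++ [p]) = (RS.map Prod.snd).sum + p.2 + curM p := by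
  simp [sM, List.getLast?_concat, add_assoc]

/-- The main invariant: along any run of the automaton, a sentential form can be
derived whose terminals have the Parikh image of the word read so far and whose
nonterminals form exactly the multiset encoded by the current state. -/
lemma steps_inv {T : Type*} [DecidableEq T] {g : ContextFreeGrammar T} [DecidableEq g.NT]
    {R₁ R₂ : RSeq g} {w : List T} (h : Steps g R₁ w R₂) :
    ∀ α : List (Symbol T g.NT), (nmL α : Multiset g.NT) = sM R₁ →
    ∃ β, g.Derives α β ∧ (nmL β : Multiset g.NT) = sM R₂ ∧
      ∀ σ : T, (tms β).count σ = (tms α).count σ + w.count σ := by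
  induction h with
  | refl => exact fun α hα => ⟨α, Relation.ReflTransGen.refl, hα, by simp⟩
  | tail h hstep h3 ih =>
    intro α hα
    obtain ⟨β, hd, hβ, hc⟩ := ih α hα
    cases hstep with
    | ext RS r hr Aj hAj =>
      have hmem : Symbol.nonterminal r.input ∈ β := by
        rw [← mem_nmL, ← Multiset.mem_coe, hβ, sM_concat]; simp [curM]
      obtain ⟨γ, hp, hγ, hcγ⟩ := produce hr hmem
      refine ⟨γ, hd.trans (Relation.ReflTransGen.single hp), ?_, ?_⟩
      · have hv : ({Aj} : Multiset g.NT) + (↑(ruleVars r) : Multiset g.NT).erase Aj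
            = ↑(ruleVars r) := by
          rw [Multiset.singleton_add, Multiset.cons_erase (by exact_mod_cast hAj)]
        have key : (nmL γ : Multiset g.NT) + {r.input}
            = sM (RS ++ [(some Aj, (↑(ruleVars r) : Multiset g.NT).erase Aj)]) + {r.input} := by
          rw [hγ, hβ, sM_concat, sM_concat]
          simp only [curM]
          conv_lhs => rw [← hv]
          abel
        exact add_right_cancel key
      · intro σ
        rw [hcγ σ, hc σ, List.count_append]; ring
    | extNe RS r hr v hv0 Aj hAj =>
      have hmem : Symbol.nonterminal r.input ∈ β := by
        rw [← mem_nmL, ← Multiset.mem_coe, hβ, sM_concat]; simp [curM]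
      obtain ⟨γ, hp, hγ, hcγ⟩ := produce hr hmem
      refine ⟨γ, hd.trans (Relation.ReflTransGen.single hp), ?_, ?_⟩
      · have hv : ({Aj} : Multiset g.NT) + (↑(ruleVars r) : Multiset g.NT).erase Aj
            = ↑(ruleVars r) := by
          rw [Multiset.singleton_add, Multiset.cons_erase (by exact_mod_cast hAj)]
        have key : (nmL γ : Multiset g.NT) + {r.input}
            = sM ((RS ++ [(some r.input, v)])
                ++ [(some Aj, (↑(ruleVars r) : Multiset g.NT).erase Aj)]) + {r.input} := by
          rw [hγ, hβ, sM_concat, sM_concat]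
          simp only [curM, List.map_append, List.sum_append, List.map_cons, List.map_nil,
            List.sum_cons, List.sum_nil]
          conv_lhs => rw [← hv]
          abel
        have h4 := add_right_cancel key
        rw [h4, show RS ++ [(some r.input, v),
              (some Aj, (↑(ruleVars r) : Multiset g.NT).erase Aj)]
            = (RS ++ [(some r.input, v)])
              ++ [(some Aj, (↑(ruleVars r) : Multiset g.NT).erase Aj)] from by simp]
      · intro σ
        rw [hcγ σ, hc σ, List.count_append]; ring
    | replE RS r hr hterm =>
      have hmem : Symbol.nonterminal r.input ∈ β := by
        rw [← mem_nmL, ← Multiset.mem_coe, hβ, sM_concat]; simp [curM]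
      obtain ⟨γ, hp, hγ, hcγ⟩ := produce hr hmem
      refine ⟨γ, hd.trans (Relation.ReflTransGen.single hp), ?_, ?_⟩
      · have key : (nmL γ : Multiset g.NT) + {r.input}
            = sM (RS ++ [((none : Option g.NT), (0 : Multiset g.NT))]) + {r.input} := by
          rw [hγ, hβ, sM_concat, sM_concat, hterm]; simp only [curM]; abel
        exact add_right_cancel key
      · intro σ
        rw [hcγ σ, hc σ, List.count_append]; ring
    | replNe RS r hr hterm v A' =>
      have hmem : Symbol.nonterminal r.input ∈ β := by
        rw [← mem_nmL, ← Multiset.mem_coe, hβ, sM_concat]; simp [curM]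
      obtain ⟨γ, hp, hγ, hcγ⟩ := produce hr hmem
      refine ⟨γ, hd.trans (Relation.ReflTransGen.single hp), ?_, ?_⟩
      · have key : (nmL γ : Multiset g.NT) + {r.input}
            = sM (RS ++ [(some A', v)]) + {r.input} := by
          rw [hγ, hβ, sM_concat, sM_concat, hterm]; simp only [curM]; abel
        exact add_right_cancel key
      · intro σ
        rw [hcγ σ, hc σ, List.count_append]; ring
    | shorten RS A v A' =>
      refine ⟨β, hd, ?_, ?_⟩
      · rw [hβ, sM_concat]
        rw [show RS ++ [(some A, v + {A'}), ((none : Option g.NT), (0 : Multiset g.NT))]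
            = (RS ++ [(some A, v + {A'})]) ++ [((none : Option g.NT), (0 : Multiset g.NT))]
          from by simp, sM_concat]
        simp only [curM, List.map_append, List.sum_append, List.map_cons, List.map_nil,
          List.sum_cons, List.sum_nil]
        abel
      · intro σ
        rw [hc σ]; simp

/-- If the automaton `A(G)` accepts a word `w`, then the grammar `G` generates from
its axiom some word `w′` with the same Parikh image as `w`. -/
theorem accepts_imp_derivable {T : Type*} [DecidableEq T]
    (g : ContextFreeGrammar T) [DecidableEq g.NT] (w : List T)
    (hw : AutAccepts g w) :
    ∃ w' : List T, w' ∈ g.language ∧ ∀ σ : T, w'.count σ = w.count σ := by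
  have hα : (nmL ([Symbol.nonterminal g.initial] : List (Symbol T g.NT)) : Multiset g.NT) = sM (start g) := by
    simp [nmL, sM, start, curM]
  obtain ⟨β, hd, hβ, hc⟩ := steps_inv hw _ hα
  have hβ0 : nmL β = [] := by
    have : (nmL β : Multiset g.NT) = 0 := by
      rw [hβ]; simp [sM, curM]
    exact (Multiset.coe_eq_zero _).mp this
  refine ⟨tms β, ?_, fun σ => ?_⟩
  · rw [ContextFreeGrammar.mem_language_iff, ← eq_map_tms hβ0]
    exact hd
  · have := hc σ
    simpa [tms, nmL] using this
end

section
/- Key invariant for soundness: if (S,∅) ⟹* RS in A(G) reading the word w, then G can derive (from S) a sentential form u over V ∪ Σ such that the multiset of variables in u equals ⟦RS⟧ (the sum over all positions i of R_i.Followup plus the singleton of R_{|RS|}.Current if it is a variable), and the Parikh image of the terminal part of u equals Π(w). -/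
/-- The multiset `⟦RS⟧`: the sum over all positions of the `Followup` multisets,
plus the `Current` of the last pair if it is a variable. -/
def bracket {T : Type*} (g : ContextFreeGrammar T) (RS : RSeq g) : Multiset g.NT :=
  (RS.map Prod.snd).sum +
    (match RS.getLast? with
      | some (some A, _) => {A}
      | _ => 0)

/-- The multiset of variables of a sentential form `u` (the Parikh image of
`u ↾ V`). -/
def formVars {T N : Type*} (u : List (Symbol T N)) : Multiset N :=
  (u.filterMap (fun s => match s with
    | Symbol.nonterminal A => some A
    | _ => none) : List N)

/-- The terminal part `u ↾ Σ` of a sentential form `u`. -/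
def formTerms {T N : Type*} (u : List (Symbol T N)) : List T :=
  u.filterMap (fun s => match s with
    | Symbol.terminal a => some a
    | _ => none)

lemma rewrite_step {T : Type*} [DecidableEq T] (g : ContextFreeGrammar T)
    [DecidableEq g.NT]
    (r : ContextFreeRule T g.NT) (hr : r ∈ g.rules) (u : List (Symbol T g.NT))
    (hA : r.input ∈ formVars u) :
    ∃ u', g.Produces u u' ∧
      formVars u' + {r.input} = formVars u + (ruleVars r : Multiset g.NT) ∧
      ∀ σ, (formTerms u').count σ = (formTerms u).count σ + (ruleTerms r).count σ := by
  rw [formVars, Multiset.mem_coe, List.mem_filterMap] at hA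
  obtain ⟨s, hs, hmatch⟩ := hA
  have hseq : s = Symbol.nonterminal r.input := by
    cases s <;> simp_all
  subst hseq
  obtain ⟨p, q, rfl⟩ := List.append_of_mem hs
  rw [show p ++ Symbol.nonterminal r.input :: q
      = p ++ [Symbol.nonterminal r.input] ++ q by simp]
  refine ⟨p ++ r.output ++ q, ⟨r, hr, r.rewrites_of_exists_parts p q⟩, ?_, ?_⟩
  · simp only [formVars, List.filterMap_append, List.filterMap_cons,
      List.filterMap_nil, ruleVars, ← Multiset.coe_add, Multiset.coe_singleton]
    abel
  · intro σ
    simp only [formTerms, List.filterMap_append, List.filterMap_cons,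
      List.count_append, ruleTerms, List.filterMap_nil, List.count_nil]
    ring

lemma bracket_concat {T : Type*} (g : ContextFreeGrammar T) (RS : RSeq g)
    (x : RPair g) :
    bracket g (RS ++ [x]) = (RS.map Prod.snd).sum + x.2 +
      (match x.1 with | some A => ({A} : Multiset g.NT) | none => 0) := by
  obtain ⟨c, v⟩ := x
  cases c <;> simp [bracket, List.getLast?_concat]

lemma step_invariant {T : Type*} [DecidableEq T] (g : ContextFreeGrammar T)
    [DecidableEq g.NT] {RS₂ RS₃ : RSeq g} {w' : List T}
    (hstep : Step g RS₂ w' RS₃) (u : List (Symbol T g.NT))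
    (hv : formVars u = bracket g RS₂) :
    ∃ u', g.Derives u u' ∧ formVars u' = bracket g RS₃ ∧
      ∀ σ, (formTerms u').count σ = (formTerms u).count σ + w'.count σ := by
  cases hstep with
  | ext RS r hr Aj hAj =>
    rw [bracket_concat] at hv
    have hmem : r.input ∈ formVars u := by rw [hv]; simp
    obtain ⟨u', hprod, hvars, hcnt⟩ := rewrite_step g r hr u hmem
    refine ⟨u', hprod.single, ?_, hcnt⟩
    have hAj' : Aj ∈ (ruleVars r : Multiset g.NT) := by
      rwa [Multiset.mem_coe]
    have hvarsum : (ruleVars r : Multiset g.NT).erase Aj + {Aj}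
        = (ruleVars r : Multiset g.NT) := by
      rw [add_comm, Multiset.singleton_add, Multiset.cons_erase hAj']
    apply add_right_cancel (b := ({r.input} : Multiset g.NT))
    rw [hvars, hv, bracket_concat]
    conv_lhs => rw [← hvarsum]
    abel
  | extNe RS r hr v hvne Aj hAj =>
    rw [bracket_concat] at hv
    have hmem : r.input ∈ formVars u := by rw [hv]; simp
    obtain ⟨u', hprod, hvars, hcnt⟩ := rewrite_step g r hr u hmem
    refine ⟨u', hprod.single, ?_, hcnt⟩
    have hAj' : Aj ∈ (ruleVars r : Multiset g.NT) := by
      rwa [Multiset.mem_coe]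
    apply add_right_cancel (b := ({r.input} : Multiset g.NT))
    rw [hvars, hv,
      show RS ++ [(some r.input, v), (some Aj, (ruleVars r : Multiset g.NT).erase Aj)]
        = (RS ++ [(some r.input, v)]) ++ [(some Aj, (ruleVars r : Multiset g.NT).erase Aj)]
        by simp,
      bracket_concat]
    simp only [List.map_append, List.sum_append, List.map_cons, List.map_nil,
      List.sum_cons, List.sum_nil]
    have hvarsum : (ruleVars r : Multiset g.NT).erase Aj + {Aj}
        = (ruleVars r : Multiset g.NT) := by
      rw [add_comm, Multiset.singleton_add, Multiset.cons_erase hAj']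
    conv_lhs => rw [← hvarsum]
    abel
  | replE RS r hr hterm =>
    rw [bracket_concat] at hv
    have hmem : r.input ∈ formVars u := by rw [hv]; simp
    obtain ⟨u', hprod, hvars, hcnt⟩ := rewrite_step g r hr u hmem
    refine ⟨u', hprod.single, ?_, hcnt⟩
    apply add_right_cancel (b := ({r.input} : Multiset g.NT))
    rw [hvars, hv, bracket_concat, hterm]
    simp only [Multiset.coe_nil]
    abel
  | replNe RS r hr hterm v A' =>
    rw [bracket_concat] at hv
    have hmem : r.input ∈ formVars u := by rw [hv]; simp
    obtain ⟨u', hprod, hvars, hcnt⟩ := rewrite_step g r hr u hmem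
    refine ⟨u', hprod.single, ?_, hcnt⟩
    apply add_right_cancel (b := ({r.input} : Multiset g.NT))
    rw [hvars, hv, bracket_concat, hterm]
    simp only [Multiset.coe_nil]
    abel
  | shorten RS A v A' =>
    refine ⟨u, by rfl, ?_, by simp⟩
    rw [hv,
      show RS ++ [(some A, v + {A'}), ((none : Option g.NT), (0 : Multiset g.NT))]
        = (RS ++ [(some A, v + {A'})]) ++ [((none : Option g.NT), (0 : Multiset g.NT))]
        by simp,
      bracket_concat, bracket_concat]
    simp only [List.map_append, List.sum_append, List.map_cons, List.map_nil,
      List.sum_cons, List.sum_nil]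
    abel

lemma steps_invariant {T : Type*} [DecidableEq T] (g : ContextFreeGrammar T)
    [DecidableEq g.NT] {RS₁ RS₂ : RSeq g} {w : List T}
    (h : Steps g RS₁ w RS₂) (u : List (Symbol T g.NT))
    (hv : formVars u = bracket g RS₁) :
    ∃ u', g.Derives u u' ∧ formVars u' = bracket g RS₂ ∧
      ∀ σ, (formTerms u').count σ = (formTerms u).count σ + w.count σ := by
  induction h with
  | refl RS => exact ⟨u, by rfl, hv, by simp⟩
  | tail hsteps hstep h3 ih =>
    obtain ⟨u₂, hd₂, hv₂, hc₂⟩ := ih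
    obtain ⟨u₃, hd₃, hv₃, hc₃⟩ := step_invariant g hstep u₂ hv₂
    exact ⟨u₃, hd₂.trans hd₃, hv₃, fun σ => by
      rw [hc₃ σ, hc₂ σ, List.count_append]; ring⟩

/-- Soundness invariant: if `A(G)` reaches state `RS` from `(S,∅)` reading `w`, then
`G` derives from `S` a sentential form `u` whose multiset of variables is `⟦RS⟧` and
whose terminal part has the same Parikh image as `w`. -/
theorem soundness_invariant {T : Type*} [DecidableEq T]
    (g : ContextFreeGrammar T) [DecidableEq g.NT] (w : List T) (RS : RSeq g)
    (h : Steps g (start g) w RS) :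
    ∃ u : List (Symbol T g.NT),
      g.Derives [Symbol.nonterminal g.initial] u ∧
      formVars u = bracket g RS ∧
      ∀ σ : T, (formTerms u).count σ = w.count σ := by
  obtain ⟨u, hd, hv, hc⟩ := steps_invariant g h [Symbol.nonterminal g.initial]
    (by simp [formVars, bracket, start])
  exact ⟨u, hd, hv, fun σ => by
    have := hc σ
    simpa [formTerms] using this⟩
end
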